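/- arXiv:2110.13019 — 2 statements merged into one kernel-verified Lean document; each statement's English description precedes it below -/
import Mathlib

section
/- Let W be an N×N discrete matrix weight with monic orthogonal sequence (P_n), and assume P_n(0) is invertible for every n ∈ ℕ₀. Let F_1, F_0, F_{−1} : ℂ → M_N(ℂ) be functions with F_1(x) invertible for all x ∈ ℕ₀ and F_{−1}(0) = 0, and let Λ : ℕ₀ → M_N(ℂ) satisfy the eigenvalue equations P_n(x+1)F_1(x) + P_n(x)F_0(x) + P_n(x−1)F_{−1}(x) = Λ_n·P_n(x) for all n ∈ ℕ₀ and all x ∈ ℂ. Assume ρ(n) := P_n(0)^{−1}Λ_n P_n(0) satisfies the block Vandermonde condition. Set Υ(0) = I and Υ(x) = F_1(0)^{−1}F_1(1)^{−1}⋯F_1(x−1)^{−1} for x ≥ 1. Then there exists a unique sequence (Q_x)_{x≥0} of monic matrix polynomials with deg Q_x = x such that P_n(x) = P_n(0)·Q_x⟦ρ(n)⟧·Υ(x) for all n, x ∈ ℕ₀. Moreover this sequence satisfies, for all n ∈ ℕ₀ and all x ≥ 1, ρ(n)·Q_x⟦ρ(n)⟧ = Q_{x+1}⟦ρ(n)⟧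 + Q_x⟦ρ(n)⟧·𝒴_x + Q_{x−1}⟦ρ(n)⟧·𝒵_x with 𝒴_x = Υ(x)F_0(x)Υ(x)^{−1} and 𝒵_x = Υ(x−1)F_{−1}(x)Υ(x)^{−1}, and ρ(n) = Q_1⟦ρ(n)⟧ + F_0(0) for all n. -/
/-!
Conjugating the eigenvalue equation at an integer `x ≥ 1` by `P_n(0)⁻¹` on the left and `Υ(x)⁻¹`
on the right turns it into the three term recurrence
`ρ(n) L_x = L_{x+1} + L_x 𝒴_x + L_{x-1} 𝒵_x` for `L_x = P_n(0)⁻¹ P_n(x) Υ(x)⁻¹`, while `L_0 = I`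
and, since `F_{-1}(0) = 0`, `L_1 = ρ(n) - F_0(0)`. So the monic polynomials defined by the same
recurrence, with `ρ(n)` replaced by a variable acting from the left, form a dual family. Any other
dual family has the same left values at every `ρ(n)`, and a matrix polynomial vanishing at all
`ρ(n)` is zero because an invertible block Vandermonde matrix kills no nonzero column of stacked
coefficients.
-/

open scoped BigOperators ComplexOrder
open Matrix Polynomial Filter

noncomputable section

/-- The space of `N × N` complex matrices. -/
abbrev Mat (N : ℕ) := Matrix (Fin N) (Fin N) ℂ

/-- Evaluation of a matrix polynomial at a (scalar) complex number. -/
def matEval {N : ℕ} (P : Polynomial (Mat N)) (z : ℂ) : Mat N :=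
  P.eval (z • (1 : Mat N))

/-- Matrix-valued inner product associated to a discrete matrix weight:
`⟨P,Q⟩_W = ∑_{x=0}^∞ P(x) W(x) Q(x)^*`. -/
def innerW {N : ℕ} (W : ℤ → Mat N) (P Q : Polynomial (Mat N)) : Mat N :=
  ∑' x : ℕ, matEval P x * W x * (matEval Q x)ᴴ

/-- `W : ℤ → M_N(ℂ)` is an `N × N` discrete matrix weight: positive definite on ℕ,
zero on negative integers, with entrywise absolutely convergent moments of all orders. -/
structure IsWeight {N : ℕ} (W : ℤ → Mat N) : Prop where
  posDef : ∀ x : ℕ, (W (x : ℤ)).PosDef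
  neg : ∀ x : ℤ, x < 0 → W x = 0
  moments : ∀ k : ℕ, ∀ i j : Fin N, Summable fun x : ℕ => (x : ℝ) ^ k * ‖W (x : ℤ) i j‖

/-- `P` is the monic orthogonal sequence of the discrete matrix weight `W`. -/
structure IsMOS {N : ℕ} (W : ℤ → Mat N) (P : ℕ → Polynomial (Mat N)) : Prop where
  monic : ∀ n, (P n).Monic
  deg : ∀ n, (P n).natDegree = n
  orth : ∀ m n, m ≠ n → innerW W (P m) (P n) = 0

/-- Left evaluation `Q⟦M⟧ = ∑_k M^k * A_k` of a matrix polynomial at a matrix. -/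
def leftEval {N : ℕ} (Q : Polynomial (Mat N)) (M : Mat N) : Mat N :=
  Q.sum fun k a => M ^ k * a

/-- The block Vandermonde condition for an eigenvalue function `ρ`. -/
def BlockVdm {N : ℕ} (ρ : ℕ → Mat N) : Prop :=
  ∀ x : ℕ, ∃ k : Fin (x + 1) → ℕ,
    IsUnit (Matrix.of fun p q : Fin (x + 1) × Fin N => (ρ (k p.1) ^ (q.1 : ℕ)) p.2 q.2)

/-- The backward difference operator `(G·∇)(x) = G(x) - G(x-1)`. -/
def nabla {N : ℕ} (G : ℤ → Mat N) : ℤ → Mat N := fun x => G x - G (x - 1)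

/-- The matrix function `Υ(x) = F₁(0)⁻¹ F₁(1)⁻¹ ⋯ F₁(x-1)⁻¹`, with `Υ(0) = I`. -/
def Ups {N : ℕ} (F1 : ℂ → Mat N) : ℕ → Mat N
  | 0 => 1
  | (x + 1) => Ups F1 x * (F1 (x : ℂ))⁻¹

section LeftEval

variable {N : ℕ}

theorem leftEval_eq_lsum (p : (Mat N)[X]) (M : Mat N) :
    leftEval p M = Polynomial.lsum (R := ℂ) (fun k => LinearMap.mulLeft ℂ (M ^ k)) p := rfl

theorem leftEval_sub (p q : (Mat N)[X]) (M : Mat N) :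
    leftEval (p - q) M = leftEval p M - leftEval q M := by
  simp only [leftEval_eq_lsum, map_sub]

theorem leftEval_add (p q : (Mat N)[X]) (M : Mat N) :
    leftEval (p + q) M = leftEval p M + leftEval q M := by
  simp only [leftEval_eq_lsum, map_add]

theorem leftEval_monomial (n : ℕ) (a M : Mat N) : leftEval (monomial n a) M = M ^ n * a :=
  sum_monomial_index a _ (mul_zero _)

theorem leftEval_C (a M : Mat N) : leftEval (C a) M = a := by
  rw [← monomial_zero_left, leftEval_monomial, pow_zero, one_mul]

theorem leftEval_X (M : Mat N) : leftEval X M = M := by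
  rw [← monomial_one_one_eq_X, leftEval_monomial, pow_one, mul_one]

theorem leftEval_one (M : Mat N) : leftEval 1 M = 1 := by
  rw [← C_1, leftEval_C]

theorem leftEval_X_mul (p : (Mat N)[X]) (M : Mat N) :
    leftEval (X * p) M = M * leftEval p M := by
  induction p using Polynomial.induction_on' with
  | add p q hp hq => rw [mul_add, leftEval_add, leftEval_add, hp, hq, mul_add]
  | monomial n a => rw [X_mul_monomial, leftEval_monomial, leftEval_monomial, pow_succ', mul_assoc]

theorem leftEval_mul_C (p : (Mat N)[X]) (a M : Mat N) :
    leftEval (p * C a) M = leftEval p M * a := by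
  induction p using Polynomial.induction_on' with
  | add p q hp hq => rw [add_mul, leftEval_add, leftEval_add, hp, hq, add_mul]
  | monomial n b => rw [monomial_mul_C, leftEval_monomial, leftEval_monomial, mul_assoc]

theorem leftEval_eq_sum_fin (p : (Mat N)[X]) (M : Mat N) {x : ℕ} (hp : p.natDegree ≤ x) :
    leftEval p M = ∑ j : Fin (x + 1), M ^ (j : ℕ) * p.coeff j := by
  rw [Fin.sum_univ_eq_sum_range (fun j => M ^ j * p.coeff j)]
  exact sum_over_range' p (fun _ => mul_zero _) _ (Nat.lt_succ_of_le hp)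

theorem BlockVdm.eq_zero_of_leftEval_eq_zero {ρ : ℕ → Mat N} (hρ : BlockVdm ρ)
    {p : (Mat N)[X]} (hp : ∀ n, leftEval p (ρ n) = 0) : p = 0 := by
  obtain ⟨k, hk⟩ := hρ p.natDegree
  set V := Matrix.of fun r s : Fin (p.natDegree + 1) × Fin N => (ρ (k r.1) ^ (s.1 : ℕ)) r.2 s.2
  let B : Matrix (Fin (p.natDegree + 1) × Fin N) (Fin N) ℂ :=
    Matrix.of fun s c => p.coeff s.1 s.2 c
  have hVB : V * B = 0 := by
    ext ⟨m, i⟩ c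
    have h := congrFun (congrFun (hp (k m)) i) c
    rw [leftEval_eq_sum_fin p _ le_rfl] at h
    simpa [V, B, Matrix.mul_apply, Fintype.sum_prod_type, Matrix.sum_apply] using h
  have hB : B = 0 := by
    rw [← Matrix.nonsing_inv_mul_cancel_left V B ((Matrix.isUnit_iff_isUnit_det V).mp hk), hVB,
      Matrix.mul_zero]
  ext j i c
  rcases le_or_gt j p.natDegree with hj | hj
  · simpa [B] using congrFun (congrFun hB (⟨j, Nat.lt_succ_of_le hj⟩, i)) c
  · simp [coeff_eq_zero_of_natDegree_lt hj]

theorem BlockVdm.eq_of_leftEval_eq {ρ : ℕ → Mat N} (hρ : BlockVdm ρ) {p q : (Mat N)[X]}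
    (h : ∀ n, leftEval p (ρ n) = leftEval q (ρ n)) : p = q :=
  sub_eq_zero.mp <| hρ.eq_zero_of_leftEval_eq_zero fun n => by rw [leftEval_sub, h, sub_self]

end LeftEval

section ThreeTerm

variable {R : Type*} [Ring R] (a : R) (Y Z : ℕ → R)

def threeTermSeq : ℕ → R[X]
  | 0 => 1
  | 1 => X - C a
  | x + 2 => X * threeTermSeq (x + 1) - threeTermSeq (x + 1) * C (Y (x + 1))
      - threeTermSeq x * C (Z (x + 1))

theorem threeTermSeq_isMonicOfDegree [Nontrivial R] (x : ℕ) :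
    IsMonicOfDegree (threeTermSeq a Y Z x) x := by
  induction x using Nat.twoStepInduction with
  | zero => exact isMonicOfDegree_zero_iff.mpr rfl
  | one => exact isMonicOfDegree_X_sub_one a
  | more x h₀ h₁ =>
    have hX : IsMonicOfDegree (X * threeTermSeq a Y Z (x + 1)) (x + 2) := by
      simpa only [add_comm 1, ← add_assoc] using (isMonicOfDegree_X R).mul h₁
    refine (hX.sub ?_).sub ?_
    · exact (natDegree_mul_C_le _ _).trans_lt (by rw [h₁.natDegree_eq]; omega)
    · exact (natDegree_mul_C_le _ _).trans_lt (by rw [h₀.natDegree_eq]; omega)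

end ThreeTerm

section ThreeTermLeftEval

variable {N : ℕ} (a : Mat N) (Y Z : ℕ → Mat N) (M : Mat N)

theorem leftEval_threeTermSeq_one : leftEval (threeTermSeq a Y Z 1) M = M - a := by
  rw [threeTermSeq, leftEval_sub, leftEval_X, leftEval_C]

theorem leftEval_threeTermSeq_add_two (x : ℕ) :
    leftEval (threeTermSeq a Y Z (x + 2)) M
      = M * leftEval (threeTermSeq a Y Z (x + 1)) M
        - leftEval (threeTermSeq a Y Z (x + 1)) M * Y (x + 1)
        - leftEval (threeTermSeq a Y Z x) M * Z (x + 1) := by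
  rw [threeTermSeq, leftEval_sub, leftEval_sub, leftEval_X_mul, leftEval_mul_C, leftEval_mul_C]

end ThreeTermLeftEval

section Dual

variable {N : ℕ} (F1 F0 Fm1 : ℂ → Mat N)

def dualY (x : ℕ) : Mat N := Ups F1 x * F0 x * (Ups F1 x)⁻¹

def dualZ (x : ℕ) : Mat N := Ups F1 (x - 1) * Fm1 x * (Ups F1 x)⁻¹

def dualPoly : ℕ → (Mat N)[X] := threeTermSeq (F0 0) (dualY F1 F0) (dualZ F1 Fm1)

variable {F1 F0 Fm1}

theorem isUnit_Ups (hF1 : ∀ x : ℕ, IsUnit (F1 x)) (x : ℕ) : IsUnit (Ups F1 x) := by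
  induction x with
  | zero => exact isUnit_one
  | succ x ih => exact ih.mul (Matrix.isUnit_nonsing_inv_iff.mpr (hF1 x))

variable {f : ℂ → Mat N} {Λ r : Mat N}

theorem eq_mul_Ups_one (hF1 : IsUnit (F1 0)) (hFm1 : Fm1 0 = 0) (hΛ : Λ * f 0 = f 0 * r)
    (heig : ∀ z, f (z + 1) * F1 z + f z * F0 z + f (z - 1) * Fm1 z = Λ * f z) :
    f 1 = f 0 * (r - F0 0) * Ups F1 1 := by
  have h : f 1 * F1 0 = f 0 * (r - F0 0) := by
    have h0 := heig 0
    rw [hFm1, mul_zero, add_zero, zero_add] at h0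
    rw [mul_sub, ← hΛ, ← h0, add_sub_cancel_right]
  have hU : Ups F1 1 = (F1 0)⁻¹ := by simp [Ups]
  rw [← h, hU, Matrix.mul_nonsing_inv_cancel_right _ _ ((isUnit_iff_isUnit_det _).mp hF1)]

theorem eq_mul_Ups_add_two (hF1 : ∀ x : ℕ, IsUnit (F1 x)) (hΛ : Λ * f 0 = f 0 * r)
    (heig : ∀ z, f (z + 1) * F1 z + f z * F0 z + f (z - 1) * Fm1 z = Λ * f z)
    {L : ℕ → Mat N} {x : ℕ} (h₀ : f x = f 0 * L x * Ups F1 x)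
    (h₁ : f ↑(x + 1) = f 0 * L (x + 1) * Ups F1 (x + 1)) :
    f ↑(x + 2) = f 0 * (r * L (x + 1) - L (x + 1) * dualY F1 F0 (x + 1)
      - L x * dualZ F1 Fm1 (x + 1)) * Ups F1 (x + 2) := by
  have hU := (isUnit_iff_isUnit_det _).mp (isUnit_Ups hF1 (x + 1))
  have hΛ' : ∀ A, f 0 * (r * A) = Λ * (f 0 * A) := fun A => by
    rw [← mul_assoc, ← hΛ, mul_assoc]
  have heig' : f ↑(x + 2) * F1 ↑(x + 1)
      = Λ * f ↑(x + 1) - f ↑(x + 1) * F0 ↑(x + 1) - f x * Fm1 ↑(x + 1) := by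
    have h := heig ↑(x + 1)
    rw [show ((x + 1 : ℕ) : ℂ) + 1 = ↑(x + 2) by push_cast; ring,
      show ((x + 1 : ℕ) : ℂ) - 1 = x by push_cast; ring] at h
    rw [← h, sub_sub, add_assoc, add_sub_cancel_right]
  have hstep : f ↑(x + 2) * F1 ↑(x + 1) = f 0 * (r * L (x + 1) - L (x + 1) * dualY F1 F0 (x + 1)
      - L x * dualZ F1 Fm1 (x + 1)) * Ups F1 (x + 1) := by
    rw [heig', h₀, h₁]
    simp only [dualY, dualZ, add_tsub_cancel_right, mul_sub, sub_mul, mul_assoc, hΛ',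
      Matrix.nonsing_inv_mul _ hU, mul_one]
  rw [show Ups F1 (x + 2) = Ups F1 (x + 1) * (F1 ↑(x + 1))⁻¹ from rfl, ← mul_assoc, ← hstep,
    Matrix.mul_nonsing_inv_cancel_right _ _ ((isUnit_iff_isUnit_det _).mp (hF1 (x + 1)))]

theorem eq_mul_leftEval_dualPoly_mul_Ups (hF1 : ∀ x : ℕ, IsUnit (F1 x)) (hFm1 : Fm1 0 = 0)
    (hΛ : Λ * f 0 = f 0 * r)
    (heig : ∀ z, f (z + 1) * F1 z + f z * F0 z + f (z - 1) * Fm1 z = Λ * f z) (x : ℕ) :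
    f x = f 0 * leftEval (dualPoly F1 F0 Fm1 x) r * Ups F1 x := by
  induction x using Nat.twoStepInduction with
  | zero => simp [dualPoly, threeTermSeq, leftEval_one, Ups]
  | one =>
    rw [Nat.cast_one, dualPoly, leftEval_threeTermSeq_one]
    exact eq_mul_Ups_one (by simpa using hF1 0) hFm1 hΛ heig
  | more x h₀ h₁ =>
    rw [eq_mul_Ups_add_two (L := fun y => leftEval (dualPoly F1 F0 Fm1 y) r) hF1 hΛ heig h₀ h₁,
      dualPoly, leftEval_threeTermSeq_add_two]

end Dual

theorem IsMOS.nontrivial {N : ℕ} {W : ℤ → Mat N} {P : ℕ → (Mat N)[X]} (hP : IsMOS W P) :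
    Nontrivial (Mat N) := by
  by_contra h
  rw [not_nontrivial_iff_subsingleton] at h
  exact one_ne_zero (isMonicOfDegree_iff_of_subsingleton.mp ⟨hP.deg 1, hP.monic 1⟩)

theorem dual_family_from_operator_general {N : ℕ} (W : ℤ → Mat N)
    (P : ℕ → Polynomial (Mat N)) (hP : IsMOS W P)
    (hP0 : ∀ n, IsUnit (matEval (P n) 0))
    (F1 F0 Fm1 : ℂ → Mat N)
    (hF1 : ∀ x : ℕ, IsUnit (F1 (x : ℂ)))
    (hFm1 : Fm1 0 = 0)
    (Λ : ℕ → Mat N)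
    (heig : ∀ n : ℕ, ∀ z : ℂ,
      matEval (P n) (z + 1) * F1 z + matEval (P n) z * F0 z
          + matEval (P n) (z - 1) * Fm1 z
        = Λ n * matEval (P n) z)
    (ρ : ℕ → Mat N)
    (hρdef : ∀ n, ρ n = (matEval (P n) 0)⁻¹ * Λ n * matEval (P n) 0)
    (hρ : BlockVdm ρ) :
    (∃! Q : ℕ → Polynomial (Mat N),
      (∀ x, (Q x).Monic ∧ (Q x).natDegree = x) ∧
      (∀ n x : ℕ, matEval (P n) (x : ℂ)
        = matEval (P n) 0 * leftEval (Q x) (ρ n) * Ups F1 x)) ∧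
    (∀ Q : ℕ → Polynomial (Mat N),
      ((∀ x, (Q x).Monic ∧ (Q x).natDegree = x) ∧
       (∀ n x : ℕ, matEval (P n) (x : ℂ)
          = matEval (P n) 0 * leftEval (Q x) (ρ n) * Ups F1 x)) →
      ((∀ n : ℕ, ∀ x : ℕ, 1 ≤ x →
          ρ n * leftEval (Q x) (ρ n)
            = leftEval (Q (x + 1)) (ρ n)
                + leftEval (Q x) (ρ n) * (Ups F1 x * F0 (x : ℂ) * (Ups F1 x)⁻¹)
                + leftEval (Q (x - 1)) (ρ n)
                    * (Ups F1 (x - 1) * Fm1 (x : ℂ) * (Ups F1 x)⁻¹)) ∧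
       (∀ n : ℕ, ρ n = leftEval (Q 1) (ρ n) + F0 0))) := by
  have := hP.nontrivial
  have hΛ n : Λ n * matEval (P n) 0 = matEval (P n) 0 * ρ n := by
    rw [hρdef, ← mul_assoc, ← mul_assoc,
      Matrix.mul_nonsing_inv _ ((isUnit_iff_isUnit_det _).mp (hP0 n)), one_mul]
  have hdual n x := eq_mul_leftEval_dualPoly_mul_Ups hF1 hFm1 (hΛ n) (heig n) x
  have huniq : ∀ Q : ℕ → (Mat N)[X], (∀ n x : ℕ, matEval (P n) (x : ℂ)
      = matEval (P n) 0 * leftEval (Q x) (ρ n) * Ups F1 x) → Q = dualPoly F1 F0 Fm1 :=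
    fun Q hQ => funext fun x => hρ.eq_of_leftEval_eq fun n =>
      (hP0 n).mul_left_cancel <| (isUnit_Ups hF1 x).mul_right_cancel <|
        (hQ n x).symm.trans (hdual n x)
  have hmonic x := threeTermSeq_isMonicOfDegree (F0 0) (dualY F1 F0) (dualZ F1 Fm1) x
  refine ⟨⟨dualPoly F1 F0 Fm1, ⟨fun x => ⟨(hmonic x).monic, (hmonic x).natDegree_eq⟩, hdual⟩,
    fun Q hQ => huniq Q hQ.2⟩, fun Q hQ => ?_⟩
  obtain rfl := huniq Q hQ.2
  refine ⟨fun n x hx => ?_, fun n => ?_⟩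
  · obtain ⟨y, rfl⟩ := Nat.exists_eq_add_of_le' hx
    rw [dualPoly, leftEval_threeTermSeq_add_two]
    simp only [dualY, dualZ, add_tsub_cancel_right]
    abel
  · rw [dualPoly, leftEval_threeTermSeq_one, sub_add_cancel]

/-- every second order difference operator in `𝓑²_R(P)` determines a
unique family of dual polynomials, which moreover satisfies the dual three term
recurrence relation. -/
theorem dual_family_from_operator {N : ℕ} (W : ℤ → Mat N) (hW : IsWeight W)
    (P : ℕ → Polynomial (Mat N)) (hP : IsMOS W P)
    (hP0 : ∀ n, IsUnit (matEval (P n) 0))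
    (F1 F0 Fm1 : ℂ → Mat N)
    (hF1 : ∀ x : ℕ, IsUnit (F1 (x : ℂ)))
    (hFm1 : Fm1 0 = 0)
    (Λ : ℕ → Mat N)
    (heig : ∀ n : ℕ, ∀ z : ℂ,
      matEval (P n) (z + 1) * F1 z + matEval (P n) z * F0 z
          + matEval (P n) (z - 1) * Fm1 z
        = Λ n * matEval (P n) z)
    (ρ : ℕ → Mat N)
    (hρdef : ∀ n, ρ n = (matEval (P n) 0)⁻¹ * Λ n * matEval (P n) 0)
    (hρ : BlockVdm ρ) :
    (∃! Q : ℕ → Polynomial (Mat N),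
      (∀ x, (Q x).Monic ∧ (Q x).natDegree = x) ∧
      (∀ n x : ℕ, matEval (P n) (x : ℂ)
        = matEval (P n) 0 * leftEval (Q x) (ρ n) * Ups F1 x)) ∧
    (∀ Q : ℕ → Polynomial (Mat N),
      ((∀ x, (Q x).Monic ∧ (Q x).natDegree = x) ∧
       (∀ n x : ℕ, matEval (P n) (x : ℂ)
          = matEval (P n) 0 * leftEval (Q x) (ρ n) * Ups F1 x)) →
      ((∀ n : ℕ, ∀ x : ℕ, 1 ≤ x →
          ρ n * leftEval (Q x) (ρ n)
            = leftEval (Q (x + 1)) (ρ n)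
                + leftEval (Q x) (ρ n) * (Ups F1 x * F0 (x : ℂ) * (Ups F1 x)⁻¹)
                + leftEval (Q (x - 1)) (ρ n)
                    * (Ups F1 (x - 1) * Fm1 (x : ℂ) * (Ups F1 x)⁻¹)) ∧
       (∀ n : ℕ, ρ n = leftEval (Q 1) (ρ n) + F0 0))) :=
  dual_family_from_operator_general W P hP hP0 F1 F0 Fm1 hF1 hFm1 Λ heig ρ hρdef hρ
end
end

section
/- Let W be an N×N discrete matrix weight with monic orthogonal sequence (P_n) and squared norms H_n, and assume P_n(0) is invertible for all n ∈ ℕ₀. Let (Q_x)_{x≥0} be monic matrix polynomials with deg Q_x = x, let ρ : ℕ₀ → M_N(ℂ), and let Υ(x) ∈ M_N(ℂ) be invertible for each x ∈ ℕ₀, such that the duality P_n(x) = P_n(0)·Q_x⟦ρ(n)⟧·Υ(x) holds for all n, x ∈ ℕ₀. Set U(n) = P_n(0)^* H_n^{−1} P_n(0). Assume that for all x, y ∈ ℕ₀ the series ∑_{n=0}^∞ Q_x⟦ρ(n)⟧^* U(n) Q_y⟦ρ(n)⟧ converges entrywise absolutely, and that for all x, y ∈ ℕ₀ both lim_{n→∞}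 Q_x⟦ρ(n+1)⟧^* P_{n+1}(0)^* H_n^{−1} P_n(0) Q_y⟦ρ(n)⟧ = 0 and lim_{n→∞} Q_x⟦ρ(n)⟧^* P_n(0)^* H_n^{−1} P_{n+1}(0) Q_y⟦ρ(n+1)⟧ = 0. Then the dual family satisfies the orthogonality relations: for all x, y ∈ ℕ₀ with x ≠ y, ∑_{n=0}^∞ Q_x⟦ρ(n)⟧^* U(n) Q_y⟦ρ(n)⟧ = 0. -/
open scoped BigOperators ComplexOrder
open Matrix Polynomial Filter

noncomputable section

/-!
The three-term recurrence of the monic orthogonal sequence gives the Christoffel–Darboux identity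
`(y - x) ∑_{n ≤ M} Pₙ(x)* Hₙ⁻¹ Pₙ(y) = P_M(x)* H_M⁻¹ P_{M+1}(y) - P_{M+1}(x)* H_M⁻¹ P_M(y)`
for `x, y ∈ ℕ`. Under the duality `Pₙ(x) = Pₙ(0) Q_x⟦ρ(n)⟧ Υ(x)`, the left-hand summand is
`Υ(x)*` times the `n`-th term of the dual series times `Υ(y)`, and the right-hand side is
`Υ(x)*` times the difference of the two sequences assumed to tend to `0`, times `Υ(y)`.
Letting `M → ∞` gives `(y - x) Υ(x)* (∑ₙ …) Υ(y) = 0`, and `Υ(x)`, `Υ(y)` are invertible.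
-/

-- In the application `p n = Pₙ(y)`, `q n = Pₙ(x)*` and `h n = Hₙ⁻¹`, while `b'`, `c'` are the
-- adjoints of the recurrence coefficients `b`, `c`.
theorem christoffel_darboux_of_recurrence {R A : Type*} [CommRing R] [Ring A] [Algebra R A]
    {x y : R} {p q b b' c c' h : ℕ → A}
    (hp₀ : y • p 0 = p 1 + b 0 * p 0)
    (hp : ∀ n, y • p (n + 1) = p (n + 2) + b (n + 1) * p (n + 1) + c n * p n)
    (hq₀ : x • q 0 = q 1 + q 0 * b' 0)
    (hq : ∀ n, x • q (n + 1) = q (n + 2) + q (n + 1) * b' (n + 1) + q n * c' n)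
    (hb : ∀ n, h n * b n = b' n * h n) (hc : ∀ n, h (n + 1) * c n = h n)
    (hc' : ∀ n, c' n * h (n + 1) = h n) (M : ℕ) :
    (y - x) • ∑ n ∈ Finset.range (M + 1), q n * h n * p n =
      q M * h M * p (M + 1) - q (M + 1) * h M * p M := by
  have hsmul : ∀ n,
      (y - x) • (q n * h n * p n) = q n * h n * (y • p n) - x • q n * h n * p n := fun n => by
    rw [sub_smul, mul_smul_comm, smul_mul_assoc, smul_mul_assoc]
  have hbn : ∀ n, q n * h n * (b n * p n) = q n * b' n * h n * p n := fun n => by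
    rw [← mul_assoc, mul_assoc (q n), hb, ← mul_assoc]
  induction M with
  | zero =>
    rw [Finset.sum_range_one, hsmul, hp₀, hq₀, mul_add, hbn]
    noncomm_ring
  | succ M ih =>
    have hcn : q (M + 1) * h (M + 1) * (c M * p M) = q (M + 1) * h M * p M := by
      rw [← mul_assoc, mul_assoc _ (h _), hc]
    have hcn' : q M * c' M * h (M + 1) * p (M + 1) = q M * h M * p (M + 1) := by
      rw [mul_assoc (q M), hc']
    rw [Finset.sum_range_succ, smul_add, ih, hsmul, hp, hq, mul_add, mul_add, hbn, hcn,
      add_mul, add_mul, hcn']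
    noncomm_ring

theorem exists_eq_sum_C_mul_of_isMonicOfDegree {R : Type*} [Ring R] {P : ℕ → R[X]}
    (hP : ∀ n, IsMonicOfDegree (P n) n) {n : ℕ} {p : R[X]} (hp : p.natDegree ≤ n) :
    ∃ A : ℕ → R, p = ∑ k ∈ Finset.range (n + 1), C (A k) * P k := by
  induction n generalizing p with
  | zero =>
    refine ⟨fun _ => p.coeff 0, ?_⟩
    rw [Finset.sum_range_one, isMonicOfDegree_zero_iff.1 (hP 0), mul_one]
    exact eq_C_of_natDegree_le_zero hp
  | succ n ih =>
    have hlead : (P (n + 1)).coeff (n + 1) = 1 := by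
      simpa [leadingCoeff, (hP _).natDegree_eq] using (hP (n + 1)).leadingCoeff_eq
    have hq : (p - C (p.coeff (n + 1)) * P (n + 1)).natDegree ≤ n := by
      refine natDegree_le_iff_coeff_eq_zero.2 fun m hm => ?_
      rw [coeff_sub, coeff_C_mul]
      rcases (Nat.succ_le_of_lt hm).eq_or_lt with rfl | hlt
      · rw [hlead, mul_one, sub_self]
      · rw [coeff_eq_zero_of_natDegree_lt (hp.trans_lt hlt),
          coeff_eq_zero_of_natDegree_lt ((hP _).natDegree_eq.trans_lt hlt), mul_zero, sub_zero]
    obtain ⟨A, hA⟩ := ih hq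
    refine ⟨Function.update A (n + 1) (p.coeff (n + 1)), ?_⟩
    rw [Finset.sum_range_succ, Function.update_self]
    rw [Finset.sum_congr rfl fun k hk => by
      rw [Function.update_of_ne (Finset.mem_range.1 hk).ne], ← hA, sub_add_cancel]


section Evaluation

variable {N : ℕ}

theorem matEval_eq_map (p : Polynomial (Mat N)) (z : ℂ) :
    matEval p z = (matPolyEquiv.symm p).map (eval z) := by
  rw [matPolyEquiv_symm_map_eval, matEval, scalar_apply, smul_one_eq_diagonal]

theorem matEval_eq_sum_range (p : Polynomial (Mat N)) (z : ℂ) :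
    matEval p z = ∑ k ∈ Finset.range (p.natDegree + 1), z ^ k • p.coeff k := by
  rw [matEval, eval_eq_sum_range]
  refine Finset.sum_congr rfl fun k _ => ?_
  rw [_root_.smul_pow, one_pow, mul_smul_comm, mul_one]

@[simp] theorem matEval_add (p q : Polynomial (Mat N)) (z : ℂ) :
    matEval (p + q) z = matEval p z + matEval q z :=
  eval_add

@[simp] theorem matEval_sub (p q : Polynomial (Mat N)) (z : ℂ) :
    matEval (p - q) z = matEval p z - matEval q z :=
  eval_sub p q _

@[simp] theorem matEval_C_mul (A : Mat N) (p : Polynomial (Mat N)) (z : ℂ) :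
    matEval (C A * p) z = A * matEval p z :=
  eval_C_mul

@[simp] theorem matEval_X_mul (p : Polynomial (Mat N)) (z : ℂ) :
    matEval (X * p) z = z • matEval p z := by
  rw [matEval, X_mul, eval_mul_X, mul_smul_comm, mul_one, matEval]

theorem eq_zero_of_forall_matEval_natCast_eq_zero {p : Polynomial (Mat N)}
    (h : ∀ x : ℕ, matEval p x = 0) : p = 0 := by
  apply matPolyEquiv.symm.injective
  ext i j : 1
  rw [map_zero, Matrix.zero_apply]
  refine eq_zero_of_infinite_isRoot _ <|
    (Set.infinite_range_of_injective (Nat.cast_injective (R := ℂ))).mono ?_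
  rintro _ ⟨x, rfl⟩
  simpa [matEval_eq_map] using congr_fun (congr_fun (h x) i) j

end Evaluation

section Weight

variable {N : ℕ} {W : ℤ → Mat N}

theorem IsWeight.summable_pow_smul (hW : IsWeight W) (k : ℕ) :
    Summable fun x : ℕ => (x : ℂ) ^ k • W x :=
  Pi.summable.2 fun i => Pi.summable.2 fun j => .of_norm <| by
    simpa using hW.moments k i j

theorem IsWeight.summable_innerW (hW : IsWeight W) (p q : Polynomial (Mat N)) :
    Summable fun x : ℕ => matEval p x * W x * (matEval q x)ᴴ := by
  have hterms : ∀ x : ℕ, matEval p x * W x * (matEval q x)ᴴ =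
      ∑ k ∈ Finset.range (p.natDegree + 1), ∑ l ∈ Finset.range (q.natDegree + 1),
        p.coeff k * ((x : ℂ) ^ (k + l) • W x) * (q.coeff l)ᴴ := by
    intro x
    simp only [matEval_eq_sum_range, conjTranspose_sum, conjTranspose_smul, star_pow,
      star_natCast, Finset.sum_mul, Finset.mul_sum, pow_add, mul_smul, smul_mul_assoc,
      mul_smul_comm, Finset.smul_sum]
    rw [Finset.sum_comm]
    exact Finset.sum_congr rfl fun _ _ => Finset.sum_congr rfl fun _ _ => smul_comm _ _ _
  simp_rw [hterms]
  exact summable_sum fun k _ => summable_sum fun l _ =>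
    ((hW.summable_pow_smul _).mul_left _).mul_right _

end Weight

section InnerProduct

variable {N : ℕ} {W : ℤ → Mat N}

theorem innerW_sub_left (hW : IsWeight W) (p₁ p₂ q : Polynomial (Mat N)) :
    innerW W (p₁ - p₂) q = innerW W p₁ q - innerW W p₂ q := by
  simp only [innerW, matEval_sub, sub_mul]
  exact (hW.summable_innerW _ _).tsum_sub (hW.summable_innerW _ _)

theorem innerW_sum_left (hW : IsWeight W) {ι : Type*} (s : Finset ι)
    (p : ι → Polynomial (Mat N)) (q : Polynomial (Mat N)) :
    innerW W (∑ i ∈ s, p i) q = ∑ i ∈ s, innerW W (p i) q := by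
  simp only [innerW, matEval, eval_finsetSum, Finset.sum_mul]
  exact Summable.tsum_finsetSum fun i _ => hW.summable_innerW _ _

theorem innerW_C_mul_left (hW : IsWeight W) (A : Mat N) (p q : Polynomial (Mat N)) :
    innerW W (C A * p) q = A * innerW W p q := by
  rw [innerW, innerW, ← (hW.summable_innerW p q).tsum_mul_left]
  simp only [matEval_C_mul, mul_assoc]

theorem innerW_conjTranspose (hW : IsWeight W) (p q : Polynomial (Mat N)) :
    (innerW W p q)ᴴ = innerW W q p := by
  simp only [innerW, conjTranspose_tsum, conjTranspose_mul, conjTranspose_conjTranspose,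
    (hW.posDef _).1.eq, mul_assoc]

theorem innerW_X_mul_left (p q : Polynomial (Mat N)) :
    innerW W (X * p) q = innerW W p (X * q) := by
  simp only [innerW, matEval_X_mul, conjTranspose_smul, star_natCast, smul_mul_assoc,
    mul_smul_comm]

theorem exists_conjTranspose_matEval_mulVec_ne_zero {p : Polynomial (Mat N)} (hp : p.Monic)
    {v : Fin N → ℂ} (hv : v ≠ 0) : ∃ x : ℕ, (matEval p x)ᴴ *ᵥ v ≠ 0 := by
  by_contra! h
  have hvanish : C (vecMulVec v (star v)) * p = 0 := by
    refine eq_zero_of_forall_matEval_natCast_eq_zero fun x => ?_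
    have : star v ᵥ* matEval p x = 0 := by
      simpa [star_mulVec] using congr_arg star (h x)
    ext i j
    simp [vecMulVec_mul, this, vecMulVec_apply]
  have hA : vecMulVec v (star v) = 0 := by
    simpa [coeff_C_mul, hp.coeff_natDegree] using congr_arg (coeff · p.natDegree) hvanish
  exact hv <| funext fun i => by simpa [vecMulVec_apply] using congr_fun (congr_fun hA i) i

theorem IsWeight.posDef_innerW_self (hW : IsWeight W) {p : Polynomial (Mat N)}
    (hp : p.Monic) : (innerW W p p).PosDef := by
  refine .of_dotProduct_mulVec_pos (innerW_conjTranspose hW p p) fun v hv => ?_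
  obtain ⟨x, hx⟩ := exists_conjTranspose_matEval_mulVec_ne_zero hp hv
  set w : ℕ → Fin N → ℂ := fun y => (matEval p y)ᴴ *ᵥ v
  have hterm : ∀ y : ℕ, star v ⬝ᵥ (matEval p y * W y * (matEval p y)ᴴ) *ᵥ v =
      star (w y) ⬝ᵥ W y *ᵥ w y := by
    intro y
    simp only [w, star_mulVec, conjTranspose_conjTranspose, dotProduct_mulVec, vecMul_vecMul,
      ← mulVec_mulVec]
  have hsum : HasSum (fun y : ℕ => star v ⬝ᵥ (matEval p y * W y * (matEval p y)ᴴ) *ᵥ v)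
      (star v ⬝ᵥ innerW W p p *ᵥ v) := by
    have hT := (hW.summable_innerW p p).hasSum
    simp only [dotProduct, mulVec, Finset.mul_sum]
    exact hasSum_sum fun i _ => hasSum_sum fun j _ =>
      ((Pi.hasSum.1 (Pi.hasSum.1 hT i) j).mul_right _).mul_left _
  calc 0 < star (w x) ⬝ᵥ W x *ᵥ w x := (hW.posDef x).dotProduct_mulVec_pos hx
    _ = _ := (hterm x).symm
    _ ≤ _ := le_hasSum hsum x fun y _ => (hterm y).symm ▸
        (hW.posDef y).posSemidef.dotProduct_mulVec_nonneg (w y)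

end InnerProduct

section OrthogonalPolynomials

variable {N : ℕ} {W : ℤ → Mat N} {P : ℕ → Polynomial (Mat N)}

theorem IsMOS.isMonicOfDegree (hP : IsMOS W P) (n : ℕ) : IsMonicOfDegree (P n) n :=
  ⟨hP.deg n, hP.monic n⟩

variable (W P) in
def normSq (n : ℕ) : Mat N := innerW W (P n) (P n)

theorem IsMOS.isUnit_det_normSq (hW : IsWeight W) (hP : IsMOS W P) (n : ℕ) :
    IsUnit (normSq W P n).det :=
  (isUnit_iff_isUnit_det _).1 (hW.posDef_innerW_self (hP.monic n)).isUnit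

theorem normSq_conjTranspose (hW : IsWeight W) (n : ℕ) : (normSq W P n)ᴴ = normSq W P n :=
  innerW_conjTranspose hW _ _

theorem IsMOS.innerW_eq_zero_of_natDegree_lt (hW : IsWeight W) (hP : IsMOS W P)
    {p : Polynomial (Mat N)} {k : ℕ} (hp : p.natDegree < k) : innerW W p (P k) = 0 := by
  obtain ⟨A, hA⟩ :=
    exists_eq_sum_C_mul_of_isMonicOfDegree hP.isMonicOfDegree (le_refl p.natDegree)
  rw [hA, innerW_sum_left hW]
  refine Finset.sum_eq_zero fun j hj => ?_
  rw [innerW_C_mul_left hW, hP.orth j k (by grind), mul_zero]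

theorem IsMOS.eq_sum_innerW_mul_inv (hW : IsWeight W) (hP : IsMOS W P) {n : ℕ}
    {p : Polynomial (Mat N)} (hp : p.natDegree ≤ n) :
    p = ∑ k ∈ Finset.range (n + 1), C (innerW W p (P k) * (normSq W P k)⁻¹) * P k := by
  obtain ⟨A, hA⟩ := exists_eq_sum_C_mul_of_isMonicOfDegree hP.isMonicOfDegree hp
  have hcoeff : ∀ k ∈ Finset.range (n + 1), innerW W p (P k) = A k * normSq W P k := by
    intro k hk
    rw [hA, innerW_sum_left hW, Finset.sum_eq_single_of_mem k hk fun j _ hjk => by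
      rw [innerW_C_mul_left hW, hP.orth j k hjk, mul_zero], innerW_C_mul_left hW, normSq]
  conv_lhs => rw [hA]
  refine Finset.sum_congr rfl fun k hk => ?_
  rw [hcoeff k hk, mul_nonsing_inv_cancel_right _ _ (hP.isUnit_det_normSq hW k)]

theorem IsMOS.natDegree_X_mul_sub_le (hP : IsMOS W P) (n : ℕ) :
    (X * P n - P (n + 1)).natDegree ≤ n := by
  nontriviality Mat N
  have hXP : IsMonicOfDegree (X * P n) (n + 1) := by
    rw [X_mul]
    exact (hP.isMonicOfDegree n).mul (isMonicOfDegree_X _)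
  exact Nat.lt_succ_iff.1 (hXP.natDegree_sub_lt n.succ_ne_zero (hP.isMonicOfDegree _))

theorem IsMOS.innerW_X_mul_eq_zero (hW : IsWeight W) (hP : IsMOS W P) {m k : ℕ}
    (hkm : k + 1 < m) : innerW W (X * P m) (P k) = 0 := by
  have hdeg : (X * P k).natDegree < m :=
    (natDegree_mul_le.trans (add_le_add natDegree_X_le (hP.deg k).le)).trans_lt (by omega)
  rw [innerW_X_mul_left, ← innerW_conjTranspose hW,
    hP.innerW_eq_zero_of_natDegree_lt hW hdeg, conjTranspose_zero]

theorem IsMOS.innerW_X_mul_succ (hW : IsWeight W) (hP : IsMOS W P) (n : ℕ) :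
    innerW W (X * P (n + 1)) (P n) = normSq W P (n + 1) := by
  have h : innerW W (X * P n - P (n + 1)) (P (n + 1)) = 0 :=
    hP.innerW_eq_zero_of_natDegree_lt hW ((hP.natDegree_X_mul_sub_le n).trans_lt n.lt_succ_self)
  rw [innerW_sub_left hW, sub_eq_zero] at h
  rw [innerW_X_mul_left, ← innerW_conjTranspose hW, h]
  exact normSq_conjTranspose hW (n + 1)

variable (W P) in
def recurrenceCoeff (n : ℕ) : Mat N := innerW W (X * P n) (P n) * (normSq W P n)⁻¹

theorem IsMOS.X_mul_sub_eq_sum (hW : IsWeight W) (hP : IsMOS W P) (n : ℕ) :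
    X * P n - P (n + 1) =
      ∑ k ∈ Finset.range (n + 1), C (innerW W (X * P n) (P k) * (normSq W P k)⁻¹) * P k := by
  conv_lhs => rw [hP.eq_sum_innerW_mul_inv hW (hP.natDegree_X_mul_sub_le n)]
  refine Finset.sum_congr rfl fun k hk => ?_
  rw [innerW_sub_left hW, hP.orth (n + 1) k (by grind), sub_zero]

theorem IsMOS.X_mul_zero (hW : IsWeight W) (hP : IsMOS W P) :
    X * P 0 = P 1 + C (recurrenceCoeff W P 0) * P 0 := by
  have h := hP.X_mul_sub_eq_sum hW 0
  rw [Finset.sum_range_one] at h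
  exact eq_add_of_sub_eq' h

theorem IsMOS.X_mul_succ (hW : IsWeight W) (hP : IsMOS W P) (n : ℕ) :
    X * P (n + 1) = P (n + 2) + C (recurrenceCoeff W P (n + 1)) * P (n + 1)
      + C (normSq W P (n + 1) * (normSq W P n)⁻¹) * P n := by
  have h := hP.X_mul_sub_eq_sum hW (n + 1)
  rw [Finset.sum_range_succ, Finset.sum_range_succ, hP.innerW_X_mul_succ hW,
    Finset.sum_eq_zero fun k hk => by
      rw [hP.innerW_X_mul_eq_zero hW (by grind), zero_mul, map_zero, zero_mul],
    zero_add, sub_eq_iff_eq_add'] at h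
  rw [h, recurrenceCoeff]
  abel

theorem IsMOS.christoffel_darboux (hW : IsWeight W) (hP : IsMOS W P) (x y : ℂ) (M : ℕ) :
    (y - star x) • ∑ n ∈ Finset.range (M + 1),
        (matEval (P n) x)ᴴ * (normSq W P n)⁻¹ * matEval (P n) y =
      (matEval (P M) x)ᴴ * (normSq W P M)⁻¹ * matEval (P (M + 1)) y
        - (matEval (P (M + 1)) x)ᴴ * (normSq W P M)⁻¹ * matEval (P M) y := by
  have hdet := hP.isUnit_det_normSq hW
  have hHinv : ∀ n, ((normSq W P n)⁻¹)ᴴ = (normSq W P n)⁻¹ := fun n => by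
    rw [conjTranspose_nonsing_inv, normSq_conjTranspose hW]
  refine christoffel_darboux_of_recurrence (b' := fun n => (recurrenceCoeff W P n)ᴴ)
    (c := fun n => normSq W P (n + 1) * (normSq W P n)⁻¹)
    (c' := fun n => (normSq W P (n + 1) * (normSq W P n)⁻¹)ᴴ)
    (by simpa using congr_arg (matEval · y) (hP.X_mul_zero hW))
    (fun n => by simpa [mul_assoc] using congr_arg (matEval · y) (hP.X_mul_succ hW n))
    (by simpa only [matEval_X_mul, matEval_add, matEval_C_mul, conjTranspose_smul,
        conjTranspose_add, conjTranspose_mul] using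
      congr_arg (fun p => (matEval p x)ᴴ) (hP.X_mul_zero hW))
    (fun n => by
      simpa only [matEval_X_mul, matEval_add, matEval_C_mul, conjTranspose_smul,
        conjTranspose_add, conjTranspose_mul] using
      congr_arg (fun p => (matEval p x)ᴴ) (hP.X_mul_succ hW n))
    (fun n => ?_) (fun n => nonsing_inv_mul_cancel_left _ _ (hdet _)) (fun n => ?_) M
  · have hS : (innerW W (X * P n) (P n))ᴴ = innerW W (X * P n) (P n) := by
      rw [innerW_conjTranspose hW, innerW_X_mul_left]
    rw [recurrenceCoeff, conjTranspose_mul, hHinv, hS, mul_assoc]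
  · rw [conjTranspose_mul, hHinv, normSq_conjTranspose hW,
      mul_nonsing_inv_cancel_right _ _ (hdet _)]

end OrthogonalPolynomials

theorem dual_orthogonality_general {N : ℕ} (W : ℤ → Mat N) (hW : IsWeight W)
    (P : ℕ → Polynomial (Mat N)) (hP : IsMOS W P)
    (H : ℕ → Mat N) (hH : ∀ n, H n = innerW W (P n) (P n))
    (Q : ℕ → Polynomial (Mat N))
    (ρ : ℕ → Mat N) (Υ : ℕ → Mat N) (hΥ : ∀ x, IsUnit (Υ x))
    (hdual : ∀ n x : ℕ, matEval (P n) (x : ℂ)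
      = matEval (P n) 0 * leftEval (Q x) (ρ n) * Υ x)
    (U : ℕ → Mat N)
    (hU : ∀ n, U n = (matEval (P n) 0)ᴴ * (H n)⁻¹ * matEval (P n) 0)
    (hsum : ∀ x y : ℕ, ∀ i k : Fin N, Summable fun n : ℕ =>
      ‖((leftEval (Q x) (ρ n))ᴴ * U n * leftEval (Q y) (ρ n)) i k‖)
    (hlim1 : ∀ x y : ℕ, Filter.Tendsto (fun n : ℕ =>
        (leftEval (Q x) (ρ (n + 1)))ᴴ * (matEval (P (n + 1)) 0)ᴴ * (H n)⁻¹
          * matEval (P n) 0 * leftEval (Q y) (ρ n))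
      Filter.atTop (nhds 0))
    (hlim2 : ∀ x y : ℕ, Filter.Tendsto (fun n : ℕ =>
        (leftEval (Q x) (ρ n))ᴴ * (matEval (P n) 0)ᴴ * (H n)⁻¹
          * matEval (P (n + 1)) 0 * leftEval (Q y) (ρ (n + 1)))
      Filter.atTop (nhds 0)) :
    ∀ x y : ℕ, x ≠ y →
      (∑' n : ℕ, (leftEval (Q x) (ρ n))ᴴ * U n * leftEval (Q y) (ρ n)) = 0 := by
  intro x y hxy
  obtain rfl : H = normSq W P := funext hH
  set f : ℕ → Mat N := fun n => (leftEval (Q x) (ρ n))ᴴ * U n * leftEval (Q y) (ρ n)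
  have hf : Summable f := Pi.summable.2 fun i => Pi.summable.2 fun k => .of_norm (hsum x y i k)
  have hkernel : ∀ n, (matEval (P n) x)ᴴ * (normSq W P n)⁻¹ * matEval (P n) y =
      (Υ x)ᴴ * f n * Υ y := fun n => by
    simp only [f, hdual, hU, conjTranspose_mul, mul_assoc]
  have hpartial : Tendsto (fun M => ∑ n ∈ Finset.range (M + 1),
      ((y : ℂ) - x) • ((Υ x)ᴴ * f n * Υ y)) atTop (nhds 0) := by
    have h := (tendsto_const_nhds (x := (Υ x)ᴴ)).mul
      (((hlim2 x y).sub (hlim1 x y)).mul (tendsto_const_nhds (x := Υ y)))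
    rw [sub_zero, zero_mul, mul_zero] at h
    refine h.congr fun M => ?_
    have hcd := hP.christoffel_darboux hW x y M
    rw [star_natCast] at hcd
    rw [← Finset.smul_sum, ← Finset.sum_congr rfl fun n _ => hkernel n, hcd,
      hdual, hdual, hdual, hdual]
    simp only [conjTranspose_mul, mul_assoc, mul_sub, sub_mul]
  have hlimit := (((hf.hasSum.mul_left (Υ x)ᴴ).mul_right (Υ y)).const_smul
    ((y : ℂ) - x)).tendsto_sum_nat.comp (tendsto_add_atTop_nat 1)
  have h0 := tendsto_nhds_unique hlimit hpartial
  rwa [smul_eq_zero, or_iff_right (sub_ne_zero.2 (by exact_mod_cast hxy.symm)),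
    (hΥ y).mul_left_eq_zero, ← star_eq_conjTranspose, (hΥ x).star.mul_right_eq_zero] at h0

/-- dual orthogonality relations for a dual family of a monic matrix
orthogonal polynomial sequence. -/
theorem dual_orthogonality {N : ℕ} (W : ℤ → Mat N) (hW : IsWeight W)
    (P : ℕ → Polynomial (Mat N)) (hP : IsMOS W P)
    (H : ℕ → Mat N) (hH : ∀ n, H n = innerW W (P n) (P n))
    (hP0 : ∀ n, IsUnit (matEval (P n) 0))
    (Q : ℕ → Polynomial (Mat N))
    (hQm : ∀ x, (Q x).Monic) (hQd : ∀ x, (Q x).natDegree = x)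
    (ρ : ℕ → Mat N) (Υ : ℕ → Mat N) (hΥ : ∀ x, IsUnit (Υ x))
    (hdual : ∀ n x : ℕ, matEval (P n) (x : ℂ)
      = matEval (P n) 0 * leftEval (Q x) (ρ n) * Υ x)
    (U : ℕ → Mat N)
    (hU : ∀ n, U n = (matEval (P n) 0)ᴴ * (H n)⁻¹ * matEval (P n) 0)
    (hsum : ∀ x y : ℕ, ∀ i k : Fin N, Summable fun n : ℕ =>
      ‖((leftEval (Q x) (ρ n))ᴴ * U n * leftEval (Q y) (ρ n)) i k‖)
    (hlim1 : ∀ x y : ℕ, Filter.Tendsto (fun n : ℕ =>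
        (leftEval (Q x) (ρ (n + 1)))ᴴ * (matEval (P (n + 1)) 0)ᴴ * (H n)⁻¹
          * matEval (P n) 0 * leftEval (Q y) (ρ n))
      Filter.atTop (nhds 0))
    (hlim2 : ∀ x y : ℕ, Filter.Tendsto (fun n : ℕ =>
        (leftEval (Q x) (ρ n))ᴴ * (matEval (P n) 0)ᴴ * (H n)⁻¹
          * matEval (P (n + 1)) 0 * leftEval (Q y) (ρ (n + 1)))
      Filter.atTop (nhds 0)) :
    ∀ x y : ℕ, x ≠ y →
      (∑' n : ℕ, (leftEval (Q x) (ρ n))ᴴ * U n * leftEval (Q y) (ρ n)) = 0 :=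
  dual_orthogonality_general W hW P hP H hH Q ρ Υ hΥ hdual U hU hsum hlim1 hlim2
end
end
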